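/- arXiv:2306.10470 — 3 statements merged into one kernel-verified Lean document; each statement's English description precedes it below -/
import Mathlib

section
/- Let 0 ≤ α < n, 0 < β < 1 with 0 < α + β < n, and let b ∈ Λ_β(Q_p^n) with b ≥ 0. Then for every locally integrable f on Q_p^n and every x ∈ Q_p^n with M_α^p(f)(x) < ∞, one has |b(x) M_α^p(f)(x) − M_α^p(b f)(x)| ≤ ‖b‖_{Λ_β} · M_{α+β}^p(f)(x). -/
open MeasureTheory ENNReal

noncomputable section

variable {p : ℕ} [Fact p.Prime] {n : ℕ}

/-- The `p`-adic ball `B_γ(x) = {y : ‖y - x‖ ≤ p^γ}` in `ℚ_p^n`. -/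
def pBall (x : Fin n → ℚ_[p]) (γ : ℤ) : Set (Fin n → ℚ_[p]) :=
  Metric.closedBall x ((p : ℝ) ^ γ)

variable [MeasurableSpace (Fin n → ℚ_[p])]

/-- The `p`-adic fractional maximal function `M_α^p f` (with values in `ℝ≥0∞`). -/
def fracMax (μ : Measure (Fin n → ℚ_[p])) (α : ℝ) (f : (Fin n → ℚ_[p]) → ℝ)
    (x : Fin n → ℚ_[p]) : ℝ≥0∞ :=
  ⨆ γ : ℤ, μ (pBall x γ) ^ (α / (n : ℝ) - 1) * ∫⁻ y in pBall x γ, (‖f y‖₊ : ℝ≥0∞) ∂μ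

/-- The fractional maximal function `M_{α,B*}^p f` restricted to a fixed ball `B*`. -/
def fracMaxOn (μ : Measure (Fin n → ℚ_[p])) (α : ℝ) (B : Set (Fin n → ℚ_[p]))
    (f : (Fin n → ℚ_[p]) → ℝ) (x : Fin n → ℚ_[p]) : ℝ≥0∞ :=
  ⨆ (γ : ℤ), ⨆ (_ : pBall x γ ⊆ B),
    μ (pBall x γ) ^ (α / (n : ℝ) - 1) * ∫⁻ y in pBall x γ, (‖f y‖₊ : ℝ≥0∞) ∂μ

/-- The maximal commutator `M_{α,b}^p f`. -/
def maxComm (μ : Measure (Fin n → ℚ_[p])) (α : ℝ) (b f : (Fin n → ℚ_[p]) → ℝ)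
    (x : Fin n → ℚ_[p]) : ℝ≥0∞ :=
  ⨆ γ : ℤ, μ (pBall x γ) ^ (α / (n : ℝ) - 1) *
    ∫⁻ y in pBall x γ, (‖b x - b y‖₊ : ℝ≥0∞) * (‖f y‖₊ : ℝ≥0∞) ∂μ

/-- The nonlinear commutator `[b, M_α^p] f = b · M_α^p f - M_α^p (b f)`. -/
def nlComm (μ : Measure (Fin n → ℚ_[p])) (α : ℝ) (b f : (Fin n → ℚ_[p]) → ℝ)
    (x : Fin n → ℚ_[p]) : ℝ :=
  b x * (fracMax μ α f x).toReal - (fracMax μ α (fun y => b y * f y) x).toReal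

/-- Membership in the `p`-adic Lipschitz space `Λ_β`. -/
def MemLipschitz (β : ℝ) (f : (Fin n → ℚ_[p]) → ℝ) : Prop :=
  ∃ C : ℝ, 0 ≤ C ∧ ∀ x y, |f x - f y| ≤ C * ‖x - y‖ ^ β

/-- The `p`-adic Lipschitz norm `‖f‖_{Λ_β}`. -/
def lipNorm (β : ℝ) (f : (Fin n → ℚ_[p]) → ℝ) : ℝ :=
  sSup {r : ℝ | ∃ x y : Fin n → ℚ_[p], x ≠ y ∧ r = |f x - f y| / ‖x - y‖ ^ β}

/-- The average `b_B` of `b` over a set `B`. -/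
def avg (μ : Measure (Fin n → ℚ_[p])) (B : Set (Fin n → ℚ_[p]))
    (b : (Fin n → ℚ_[p]) → ℝ) : ℝ :=
  (μ B).toReal⁻¹ * ∫ y in B, b y ∂μ

/-- The Luxemburg norm of an `ℝ≥0∞`-valued function. -/
def luxNormE (μ : Measure (Fin n → ℚ_[p])) (q : (Fin n → ℚ_[p]) → ℝ)
    (g : (Fin n → ℚ_[p]) → ℝ≥0∞) : ℝ≥0∞ :=
  sInf {η : ℝ≥0∞ | 0 < η ∧ η < ⊤ ∧ ∫⁻ x, (g x / η) ^ q x ∂μ ≤ 1}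

/-- The Luxemburg norm `‖f‖_{L^{q(·)}}` of a real-valued function. -/
def luxNorm (μ : Measure (Fin n → ℚ_[p])) (q : (Fin n → ℚ_[p]) → ℝ)
    (f : (Fin n → ℚ_[p]) → ℝ) : ℝ≥0∞ :=
  luxNormE μ q fun x => (‖f x‖₊ : ℝ≥0∞)

/-- The class `P(ℚ_p^n)` of variable exponents: `1 < r₋ ≤ r₊ < ∞`. -/
def IsPExp (μ : Measure (Fin n → ℚ_[p])) (r : (Fin n → ℚ_[p]) → ℝ) : Prop :=
  Measurable r ∧ (∀ x, 1 ≤ r x) ∧ 1 < essInf r μ ∧ ∃ M : ℝ, ∀ᵐ x ∂μ, r x ≤ M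

/-- The class `C^log(ℚ_p^n)` of globally log-Hölder continuous variable exponents. -/
def IsLogHolder (μ : Measure (Fin n → ℚ_[p])) (r : (Fin n → ℚ_[p]) → ℝ) : Prop :=
  Measurable r ∧ (∀ x, 1 ≤ r x) ∧
    ∃ C : ℝ, 0 ≤ C ∧
      (∀ (γ : ℤ) (x : Fin n → ℚ_[p]),
        (γ : ℝ) * (essInf r (μ.restrict (pBall x γ)) - essSup r (μ.restrict (pBall x γ))) ≤ C) ∧
      ∀ x y : Fin n → ℚ_[p], |r x - r y| ≤ C / Real.logb p ((p : ℝ) + min ‖x‖ ‖y‖)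

/-- The set of values whose supremum is the `lip_β^q` norm. -/
def lipqSet (μ : Measure (Fin n → ℚ_[p])) (β q : ℝ) (f : (Fin n → ℚ_[p]) → ℝ) : Set ℝ :=
  {r : ℝ | ∃ (x : Fin n → ℚ_[p]) (γ : ℤ),
    r = (μ (pBall x γ)).toReal ^ (-(β / (n : ℝ))) *
      ((μ (pBall x γ)).toReal⁻¹ * ∫ y in pBall x γ, |f y - avg μ (pBall x γ) f| ^ q ∂μ) ^ (1 / q)}


/-! ### Auxiliary lemmas -/

section Aux
variable {p : ℕ} [Fact p.Prime] {n : ℕ}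

lemma hp1 : (1:ℝ) < p := by exact_mod_cast (Fact.out : p.Prime).one_lt
lemma hp0 : (0:ℝ) < p := lt_trans one_pos hp1

lemma myDigit (w : ℚ_[p]) (h : ‖w‖ ≤ 1) : ∃ d : ℕ, d < p ∧ ‖w - d‖ ≤ (p:ℝ)⁻¹ := by
  set w' : ℤ_[p] := ⟨w, h⟩ with hw'
  refine ⟨w'.appr 1, by simpa using w'.appr_lt 1, ?_⟩
  have := ((w' - (w'.appr 1 : ℤ_[p])).norm_le_pow_iff_mem_span_pow 1).mpr (w'.appr_spec 1)
  have h2 : ‖((w' - (w'.appr 1 : ℤ_[p])) : ℚ_[p])‖ ≤ (p:ℝ)^(-1:ℤ) := by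
    rwa [PadicInt.norm_def] at this
  simpa [zpow_neg] using h2

variable [MeasurableSpace (Fin n → ℚ_[p])]

lemma ball_translate [BorelSpace (Fin n → ℚ_[p])] (μ : Measure (Fin n → ℚ_[p]))
    [μ.IsAddHaarMeasure] (x : Fin n → ℚ_[p]) (r : ℝ) :
    μ (Metric.closedBall x r) = μ (Metric.closedBall 0 r) := by
  have : Metric.closedBall x r = (fun y => -x + y) ⁻¹' Metric.closedBall 0 r := by
    ext y; simp [Metric.mem_closedBall, dist_eq_norm]
  rw [this, measure_preimage_add]

/-- Centers for the covering/packing argument. -/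
noncomputable def ctr (k : ℤ) (m : Fin n → Fin p) : Fin n → ℚ_[p] :=
  fun j => ((m j : ℕ) : ℚ_[p]) * (p:ℚ_[p])^(-(k+1))

lemma ctr_dist (k : ℤ) (m m' : Fin n → Fin p) (j : Fin n) :
    dist (ctr k m j) (ctr k m' j) = ‖(((m j : ℕ):ℚ_[p]) - ((m' j : ℕ):ℚ_[p]))‖ * (p:ℝ)^(k+1) := by
  rw [dist_eq_norm, ctr, ctr, ← sub_mul, norm_mul, Padic.norm_p_zpow, neg_neg]

lemma int_norm_ge (a b : ℕ) (ha : a < p) (hb : b < p) (hab : a ≠ b) :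
    (1:ℝ) ≤ ‖(((a:ℚ_[p])) - b)‖ := by
  by_contra h
  push_neg at h
  have : ‖(((a - b : ℤ)):ℚ_[p])‖ < 1 := by push_cast; simpa using h
  rw [Padic.norm_intCast_lt_one_iff] at this
  have := Int.eq_zero_of_abs_lt_dvd this (by
    rw [abs_sub_lt_iff]; constructor <;> omega)
  omega

lemma ctr_norm_le (k : ℤ) (m : Fin n → Fin p) (j : Fin n) : ‖ctr k m j‖ ≤ (p:ℝ)^(k+1) := by
  rw [ctr, norm_mul, Padic.norm_p_zpow, neg_neg]
  have h1 : ‖((m j : ℕ) : ℚ_[p])‖ ≤ 1 := by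
    have := Padic.norm_int_le_one (p := p) ((m j : ℕ) : ℤ)
    push_cast at this; exact this
  nlinarith [zpow_pos (hp0 (p := p)) (k+1), h1, norm_nonneg (((m j : ℕ)) : ℚ_[p])]

lemma stepUp [BorelSpace (Fin n → ℚ_[p])] (μ : Measure (Fin n → ℚ_[p]))
    [μ.IsAddHaarMeasure] (k : ℤ) :
    (p:ℝ≥0∞)^n * μ (pBall (0 : Fin n → ℚ_[p]) k) ≤ μ (pBall 0 (k+1)) := by
  classical
  have hpk1 : ((p:ℝ)^k) ≤ (p:ℝ)^(k+1) := by
    apply zpow_le_zpow_right₀ (le_of_lt (hp1 (p:=p))); omega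
  have hdisj : Pairwise (Function.onFun Disjoint
      fun m : Fin n → Fin p => Metric.closedBall (ctr k m) ((p:ℝ)^k)) := by
    intro m m' hmm'
    obtain ⟨j, hj⟩ := Function.ne_iff.mp hmm'
    rw [Function.onFun, Set.disjoint_left]
    intro y hy hy'
    rw [Metric.mem_closedBall] at hy hy'
    have h1 : dist (ctr k m j) (ctr k m' j) ≤ (p:ℝ)^k := by
      refine (IsUltrametricDist.dist_triangle_max _ (y j) _).trans (max_le ?_ ?_)
      · exact (dist_le_pi_dist (ctr k m) y j).trans (by rwa [dist_comm] at hy)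
      · exact (dist_le_pi_dist y (ctr k m') j).trans hy'
    have h2 : (p:ℝ)^(k+1) ≤ dist (ctr k m j) (ctr k m' j) := by
      rw [ctr_dist k m m' j]
      nlinarith [int_norm_ge (p:=p) (m j) (m' j) (m j).isLt (m' j).isLt
        (fun h => hj (Fin.val_injective h)), zpow_pos (hp0 (p:=p)) (k+1)]
    have h3 : (p:ℝ)^k < (p:ℝ)^(k+1) := by
      apply zpow_lt_zpow_right₀ (hp1 (p:=p)); omega
    linarith
  have hsub : ∀ m : Fin n → Fin p,
      Metric.closedBall (ctr k m) ((p:ℝ)^k) ⊆ pBall (0 : Fin n → ℚ_[p]) (k+1) := by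
    intro m y hy
    rw [Metric.mem_closedBall] at hy
    rw [pBall, Metric.mem_closedBall, dist_pi_le_iff (by positivity)]
    intro j
    refine (IsUltrametricDist.dist_triangle_max _ (ctr k m j) _).trans (max_le ?_ ?_)
    · exact ((dist_le_pi_dist y (ctr k m) j).trans hy).trans hpk1
    · simpa [dist_eq_norm] using ctr_norm_le k m j
  calc (p:ℝ≥0∞)^n * μ (pBall (0 : Fin n → ℚ_[p]) k)
      = ∑' m : Fin n → Fin p, μ (Metric.closedBall (ctr k m) ((p:ℝ)^k)) := by
        rw [tsum_fintype]
        have : ∀ m : Fin n → Fin p, μ (Metric.closedBall (ctr k m) ((p:ℝ)^k))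
            = μ (pBall (0 : Fin n → ℚ_[p]) k) := by
          intro m; rw [ball_translate, pBall, ball_translate]
        simp only [this, Finset.sum_const, Finset.card_univ]
        rw [Fintype.card_fun]
        simp [nsmul_eq_mul, mul_comm]
    _ = μ (⋃ m : Fin n → Fin p, Metric.closedBall (ctr k m) ((p:ℝ)^k)) :=
        (measure_iUnion hdisj (fun m => measurableSet_closedBall)).symm
    _ ≤ μ (pBall 0 (k+1)) := measure_mono (Set.iUnion_subset hsub)

lemma stepDown [BorelSpace (Fin n → ℚ_[p])] (μ : Measure (Fin n → ℚ_[p]))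
    [μ.IsAddHaarMeasure] (k : ℤ) :
    μ (pBall (0 : Fin n → ℚ_[p]) (k+1)) ≤ (p:ℝ≥0∞)^n * μ (pBall (0 : Fin n → ℚ_[p]) k) := by
  classical
  have hcov : pBall (0 : Fin n → ℚ_[p]) (k+1) ⊆
      ⋃ m : Fin n → Fin p, Metric.closedBall (ctr k m) ((p:ℝ)^k) := by
    intro z hz
    rw [pBall, Metric.mem_closedBall, dist_pi_le_iff (by positivity)] at hz
    have key : ∀ j : Fin n, ∃ d : Fin p, dist (z j) (ctr k (fun _ => d) j) ≤ (p:ℝ)^k := by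
      intro j
      have hzj : ‖z j‖ ≤ (p:ℝ)^(k+1) := by simpa [dist_eq_norm] using hz j
      set w : ℚ_[p] := z j * (p:ℚ_[p])^(k+1) with hw
      have hwnorm : ‖w‖ ≤ 1 := by
        rw [hw, norm_mul, Padic.norm_p_zpow]
        calc ‖z j‖ * (p:ℝ)^(-(k+1)) ≤ (p:ℝ)^(k+1) * (p:ℝ)^(-(k+1)) := by
              apply mul_le_mul_of_nonneg_right hzj (zpow_pos (hp0 (p:=p)) _).le
          _ = 1 := by rw [← zpow_add₀ (ne_of_gt (hp0 (p:=p)))]; ring_nf; simp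
      obtain ⟨d, hd, hdist⟩ := myDigit w hwnorm
      refine ⟨⟨d, hd⟩, ?_⟩
      have : z j - ((d:ℚ_[p])) * (p:ℚ_[p])^(-(k+1)) = (w - d) * (p:ℚ_[p])^(-(k+1)) := by
        have hpz : (p:ℚ_[p]) ≠ 0 := by
          exact_mod_cast Nat.Prime.ne_zero (Fact.out : p.Prime)
        rw [hw, sub_mul, mul_assoc, ← zpow_add₀ hpz]
        ring_nf
        simp
      rw [dist_eq_norm, ctr, this, norm_mul, Padic.norm_p_zpow, neg_neg]
      calc ‖w - d‖ * (p:ℝ)^(k+1) ≤ (p:ℝ)⁻¹ * (p:ℝ)^(k+1) := by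
            apply mul_le_mul_of_nonneg_right hdist (zpow_pos (hp0 (p:=p)) _).le
        _ = (p:ℝ)^k := by
            rw [← zpow_neg_one, ← zpow_add₀ (ne_of_gt (hp0 (p:=p)))]; ring_nf
    choose d hd using key
    refine Set.mem_iUnion.mpr ⟨d, ?_⟩
    rw [Metric.mem_closedBall, dist_pi_le_iff (zpow_pos (hp0 (p:=p)) k).le]
    intro j
    simpa [ctr] using hd j
  calc μ (pBall (0 : Fin n → ℚ_[p]) (k+1))
      ≤ ∑' m : Fin n → Fin p, μ (Metric.closedBall (ctr k m) ((p:ℝ)^k)) :=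
        (measure_mono hcov).trans (measure_iUnion_le _)
    _ = (p:ℝ≥0∞)^n * μ (pBall (0 : Fin n → ℚ_[p]) k) := by
        rw [tsum_fintype]
        have : ∀ m : Fin n → Fin p, μ (Metric.closedBall (ctr k m) ((p:ℝ)^k))
            = μ (pBall (0 : Fin n → ℚ_[p]) k) := by
          intro m; rw [ball_translate, pBall, ball_translate]
        simp only [this, Finset.sum_const, Finset.card_univ]
        rw [Fintype.card_fun]
        simp [nsmul_eq_mul, mul_comm]

lemma measure_pBall_lb [BorelSpace (Fin n → ℚ_[p])] (μ : Measure (Fin n → ℚ_[p]))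
    [μ.IsAddHaarMeasure] (hμ : μ (Metric.closedBall 0 1) = 1)
    (x : Fin n → ℚ_[p]) (γ : ℤ) :
    ENNReal.ofReal (((p:ℝ)^γ)^(n:ℕ)) ≤ μ (pBall x γ) := by
  have hx : μ (pBall x γ) = μ (pBall (0 : Fin n → ℚ_[p]) γ) := by
    rw [pBall, pBall, ball_translate]
  rw [hx]; clear hx
  have hpne : (p:ℝ) ≠ 0 := ne_of_gt (hp0 (p:=p))
  have hbase : μ (pBall (0 : Fin n → ℚ_[p]) 0) = 1 := by
    rw [pBall]; simpa using hμ
  have hcast : ENNReal.ofReal ((p:ℝ)^(n:ℕ)) = (p:ℝ≥0∞)^n := by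
    rw [ENNReal.ofReal_pow (le_of_lt (hp0 (p:=p)))]
    congr 1
    exact ENNReal.ofReal_natCast p
  have hne0 : ((p:ℝ≥0∞)^n) ≠ 0 := by
    apply pow_ne_zero; exact_mod_cast Nat.Prime.ne_zero (Fact.out : p.Prime)
  have hneT : ((p:ℝ≥0∞)^n) ≠ ⊤ := by
    apply pow_ne_top; exact ENNReal.natCast_ne_top p
  induction γ using Int.induction_on with
  | zero => simp [hbase]
  | succ k ih =>
      have : (((p:ℝ)^((k:ℤ)+1))^(n:ℕ)) = (p:ℝ)^(n:ℕ) * ((p:ℝ)^(k:ℤ))^(n:ℕ) := by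
        rw [zpow_add_one₀ hpne, mul_pow, mul_comm]
      rw [this, ENNReal.ofReal_mul (by positivity), hcast]
      calc (p:ℝ≥0∞)^n * ENNReal.ofReal (((p:ℝ)^(k:ℤ))^(n:ℕ))
          ≤ (p:ℝ≥0∞)^n * μ (pBall (0 : Fin n → ℚ_[p]) k) := mul_le_mul_right ih _
        _ ≤ μ (pBall (0 : Fin n → ℚ_[p]) (k+1)) := stepUp μ k
  | pred k ih =>
      have hstep := stepDown μ (-(k:ℤ)-1)
      have heq : (-(k:ℤ)-1) + 1 = -(k:ℤ) := by ring
      rw [heq] at hstep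
      have h2 := le_trans ih hstep
      have key : (p:ℝ≥0∞)^n * ENNReal.ofReal (((p:ℝ)^(-(k:ℤ)-1))^(n:ℕ))
          = ENNReal.ofReal (((p:ℝ)^(-(k:ℤ)))^(n:ℕ)) := by
        rw [← hcast, ← ENNReal.ofReal_mul (by positivity), ← mul_pow]
        congr 2
        rw [show (-(k:ℤ)) = (-(k:ℤ)-1) + 1 by ring, zpow_add_one₀ hpne]
        ring_nf
      rw [← key] at h2
      exact (ENNReal.mul_le_mul_iff_right hne0 hneT).mp h2

lemma measure_pBall_pos [BorelSpace (Fin n → ℚ_[p])] (μ : Measure (Fin n → ℚ_[p]))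
    [μ.IsAddHaarMeasure] (hμ : μ (Metric.closedBall 0 1) = 1)
    (x : Fin n → ℚ_[p]) (γ : ℤ) : μ (pBall x γ) ≠ 0 := by
  have := measure_pBall_lb μ hμ x γ
  intro h
  rw [h, le_zero_iff, ENNReal.ofReal_eq_zero] at this
  nlinarith [pow_pos (zpow_pos (hp0 (p:=p)) γ) n]

lemma measure_pBall_ne_top [BorelSpace (Fin n → ℚ_[p])] (μ : Measure (Fin n → ℚ_[p]))
    [μ.IsAddHaarMeasure] (x : Fin n → ℚ_[p]) (γ : ℤ) : μ (pBall x γ) ≠ ⊤ :=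
  (isCompact_closedBall x _).measure_lt_top.ne

/-- Key exponent inequality. -/
lemma key_ineq [BorelSpace (Fin n → ℚ_[p])] (hn : 0 < n) (μ : Measure (Fin n → ℚ_[p]))
    [μ.IsAddHaarMeasure] (hμ : μ (Metric.closedBall 0 1) = 1)
    (α β : ℝ) (hβ0 : 0 < β) (x : Fin n → ℚ_[p]) (γ : ℤ) :
    ENNReal.ofReal (((p:ℝ)^γ)^β) * μ (pBall x γ) ^ (α / (n:ℝ) - 1)
      ≤ μ (pBall x γ) ^ ((α + β) / (n:ℝ) - 1) := by
  set M := μ (pBall x γ) with hM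
  have hM0 : M ≠ 0 := measure_pBall_pos μ hμ x γ
  have hMT : M ≠ ⊤ := measure_pBall_ne_top μ x γ
  have hsplit : M ^ ((α + β) / (n:ℝ) - 1) = M ^ (β / (n:ℝ)) * M ^ (α / (n:ℝ) - 1) := by
    rw [← ENNReal.rpow_add _ _ hM0 hMT]
    congr 1
    field_simp
    ring
  rw [hsplit]
  apply mul_le_mul_left
  have hpb : (0:ℝ) < ((p:ℝ)^γ)^(n:ℕ) := pow_pos (zpow_pos (hp0 (p:=p)) γ) n
  calc ENNReal.ofReal (((p:ℝ)^γ)^β)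
      = ENNReal.ofReal ((((p:ℝ)^γ)^(n:ℕ)) ^ (β / (n:ℝ))) := by
        congr 1
        rw [← Real.rpow_natCast ((p:ℝ)^γ) n, ← Real.rpow_mul (zpow_pos (hp0 (p:=p)) γ).le]
        congr 1
        field_simp
    _ = ENNReal.ofReal (((p:ℝ)^γ)^(n:ℕ)) ^ (β / (n:ℝ)) := by
        rw [← ENNReal.ofReal_rpow_of_pos hpb]
    _ ≤ M ^ (β / (n:ℝ)) := by
        apply ENNReal.rpow_le_rpow (measure_pBall_lb μ hμ x γ) (by positivity)

lemma lipNorm_spec (hn : 0 < n) (β : ℝ) (hβ0 : 0 < β) (b : (Fin n → ℚ_[p]) → ℝ)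
    (hbLip : MemLipschitz β b) :
    0 ≤ lipNorm β b ∧ ∀ x y, |b x - b y| ≤ lipNorm β b * ‖x - y‖ ^ β := by
  obtain ⟨C, hC0, hC⟩ := hbLip
  set S := {r : ℝ | ∃ x y : Fin n → ℚ_[p], x ≠ y ∧ r = |b x - b y| / ‖x - y‖ ^ β} with hS
  have hnormpos : ∀ x y : Fin n → ℚ_[p], x ≠ y → (0:ℝ) < ‖x - y‖ ^ β := by
    intro x y hxy
    apply Real.rpow_pos_of_pos
    rw [norm_pos_iff, sub_ne_zero]
    exact hxy
  have hbdd : BddAbove S := by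
    refine ⟨C, fun r hr => ?_⟩
    obtain ⟨x, y, hxy, rfl⟩ := hr
    rw [div_le_iff₀ (hnormpos x y hxy)]
    exact hC x y
  have hne : S.Nonempty := by
    refine ⟨_, ⟨0, (fun _ => 1), ?_, rfl⟩⟩
    intro h
    have := congrFun h ⟨0, hn⟩
    simp at this
  have h0 : 0 ≤ lipNorm β b := by
    obtain ⟨r, hr⟩ := hne
    have hr0 : 0 ≤ r := by
      obtain ⟨x, y, hxy, rfl⟩ := hr
      positivity
    exact le_trans hr0 (le_csSup hbdd hr)
  refine ⟨h0, fun x y => ?_⟩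
  by_cases hxy : x = y
  · subst hxy
    simp only [sub_self, abs_zero, norm_zero]
    rw [Real.zero_rpow (ne_of_gt hβ0)]
    simp
  · have hmem : |b x - b y| / ‖x - y‖ ^ β ∈ S := ⟨x, y, hxy, rfl⟩
    have := le_csSup hbdd hmem
    rw [div_le_iff₀ (hnormpos x y hxy)] at this
    exact this

end Aux

theorem nlComm_pointwise_bound_of_nonneg_lipschitz
    (hn : 0 < n) [BorelSpace (Fin n → ℚ_[p])]
    (μ : Measure (Fin n → ℚ_[p])) [μ.IsAddHaarMeasure]
    (hμ : μ (Metric.closedBall 0 1) = 1)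
    (α β : ℝ) (hα0 : 0 ≤ α) (hαn : α < n) (hβ0 : 0 < β) (hβ1 : β < 1)
    (hαβ0 : 0 < α + β) (hαβn : α + β < n)
    (b : (Fin n → ℚ_[p]) → ℝ) (hb : LocallyIntegrable b μ)
    (hbLip : MemLipschitz β b) (hbpos : ∀ x, 0 ≤ b x) :
    ∀ f : (Fin n → ℚ_[p]) → ℝ, LocallyIntegrable f μ →
      ∀ x : (Fin n → ℚ_[p]), fracMax μ α f x ≠ ⊤ →
        ENNReal.ofReal |nlComm μ α b f x| ≤
          ENNReal.ofReal (lipNorm β b) * fracMax μ (α + β) f x := by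
  intro f hf x hF
  obtain ⟨hL0, hLb⟩ := lipNorm_spec hn β hβ0 b hbLip
  by_cases hDT : ENNReal.ofReal (lipNorm β b) * fracMax μ (α + β) f x = ⊤
  · exact hDT ▸ le_top
  have hK : ∀ γ : ℤ, IsCompact (pBall x γ) := fun γ => isCompact_closedBall x _
  have hKm : ∀ γ : ℤ, MeasurableSet (pBall x γ) := fun γ => measurableSet_closedBall
  set L := lipNorm β b with hLdef
  set D := ENNReal.ofReal L * fracMax μ (α + β) f x with hDdef
  have hbxy : ∀ (γ : ℤ) (y : Fin n → ℚ_[p]), y ∈ pBall x γ → |b x - b y| ≤ L * ((p:ℝ)^γ)^β := by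
    intro γ y hy
    refine (hLb x y).trans (mul_le_mul_of_nonneg_left ?_ hL0)
    refine Real.rpow_le_rpow (norm_nonneg _) ?_ hβ0.le
    rw [pBall, Metric.mem_closedBall] at hy
    rw [show x - y = -(y - x) by ring, norm_neg, ← dist_eq_norm]
    exact hy
  have hrpow_nn : ∀ γ : ℤ, (0:ℝ) ≤ L * ((p:ℝ)^γ)^β := by
    intro γ
    have := Real.rpow_nonneg (zpow_pos (hp0 (p:=p)) γ).le β
    positivity
  have hEA : ∀ γ : ℤ, ENNReal.ofReal (L * ((p:ℝ)^γ)^β) *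
      (μ (pBall x γ) ^ (α / (n:ℝ) - 1) * ∫⁻ y in pBall x γ, (‖f y‖₊ : ℝ≥0∞) ∂μ) ≤ D := by
    intro γ
    rw [ENNReal.ofReal_mul hL0, hDdef]
    calc ENNReal.ofReal L * ENNReal.ofReal (((p:ℝ)^γ)^β) *
        (μ (pBall x γ) ^ (α / (n:ℝ) - 1) * ∫⁻ y in pBall x γ, (‖f y‖₊ : ℝ≥0∞) ∂μ)
        = ENNReal.ofReal L * ((ENNReal.ofReal (((p:ℝ)^γ)^β) * μ (pBall x γ) ^ (α / (n:ℝ) - 1)) *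
            ∫⁻ y in pBall x γ, (‖f y‖₊ : ℝ≥0∞) ∂μ) := by ring
      _ ≤ ENNReal.ofReal L * (μ (pBall x γ) ^ ((α + β) / (n:ℝ) - 1) *
            ∫⁻ y in pBall x γ, (‖f y‖₊ : ℝ≥0∞) ∂μ) :=
          mul_le_mul_right (mul_le_mul_left (key_ineq hn μ hμ α β hβ0 x γ) _) _
      _ ≤ ENNReal.ofReal L * fracMax μ (α + β) f x := by
          refine mul_le_mul_right ?_ _
          exact le_iSup (fun γ => μ (pBall x γ) ^ ((α + β) / (n:ℝ) - 1) *
            ∫⁻ y in pBall x γ, (‖f y‖₊ : ℝ≥0∞) ∂μ) γ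
  have hbfm : ∀ γ : ℤ, AEMeasurable (fun y => (‖b y * f y‖₊ : ℝ≥0∞)) (μ.restrict (pBall x γ)) :=
    fun γ => ((hb.integrableOn_isCompact (hK γ)).aestronglyMeasurable.mul
      (hf.integrableOn_isCompact (hK γ)).aestronglyMeasurable).enorm
  have claim1 : fracMax μ α (fun y => b y * f y) x ≤ ENNReal.ofReal (b x) * fracMax μ α f x + D := by
    refine iSup_le fun γ => ?_
    have hptwise : ∀ᵐ y ∂(μ.restrict (pBall x γ)), (‖b y * f y‖₊ : ℝ≥0∞) ≤
        (ENNReal.ofReal (b x) + ENNReal.ofReal (L * ((p:ℝ)^γ)^β)) * (‖f y‖₊ : ℝ≥0∞) := by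
      refine (ae_restrict_iff' (hKm γ)).mpr (Filter.Eventually.of_forall fun y hy => ?_)
      have hby : b y ≤ b x + L * ((p:ℝ)^γ)^β := by
        have h1 := hbxy γ y hy
        rw [abs_sub_comm] at h1
        have h2 := abs_le.mp h1
        linarith [h2.2]
      calc ((‖b y * f y‖₊ : ℝ≥0∞)) = ENNReal.ofReal (b y) * (‖f y‖₊ : ℝ≥0∞) := by
            rw [nnnorm_mul, ENNReal.coe_mul, ← enorm_eq_nnnorm (b y), Real.enorm_eq_ofReal (hbpos y)]
        _ ≤ (ENNReal.ofReal (b x) + ENNReal.ofReal (L * ((p:ℝ)^γ)^β)) * (‖f y‖₊ : ℝ≥0∞) := by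
            refine mul_le_mul_left ?_ _
            rw [← ENNReal.ofReal_add (hbpos x) (hrpow_nn γ)]
            exact ENNReal.ofReal_le_ofReal hby
    calc μ (pBall x γ) ^ (α/(n:ℝ)-1) * ∫⁻ y in pBall x γ, (‖b y * f y‖₊ : ℝ≥0∞) ∂μ
        ≤ μ (pBall x γ) ^ (α/(n:ℝ)-1) * ∫⁻ y in pBall x γ,
            (ENNReal.ofReal (b x) + ENNReal.ofReal (L * ((p:ℝ)^γ)^β)) * (‖f y‖₊ : ℝ≥0∞) ∂μ :=
          mul_le_mul_right (lintegral_mono_ae hptwise) _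
      _ = μ (pBall x γ) ^ (α/(n:ℝ)-1) * ((ENNReal.ofReal (b x) + ENNReal.ofReal (L * ((p:ℝ)^γ)^β)) *
            ∫⁻ y in pBall x γ, (‖f y‖₊ : ℝ≥0∞) ∂μ) := by
          rw [lintegral_const_mul' _ _
            (ENNReal.add_ne_top.mpr ⟨ENNReal.ofReal_ne_top, ENNReal.ofReal_ne_top⟩)]
      _ = ENNReal.ofReal (b x) * (μ (pBall x γ) ^ (α/(n:ℝ)-1) *
              ∫⁻ y in pBall x γ, (‖f y‖₊ : ℝ≥0∞) ∂μ)
            + ENNReal.ofReal (L * ((p:ℝ)^γ)^β) * (μ (pBall x γ) ^ (α/(n:ℝ)-1) *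
              ∫⁻ y in pBall x γ, (‖f y‖₊ : ℝ≥0∞) ∂μ) := by
          ring
      _ ≤ ENNReal.ofReal (b x) * fracMax μ α f x + D := by
          refine add_le_add (mul_le_mul_right ?_ _) (hEA γ)
          exact le_iSup (fun γ => μ (pBall x γ) ^ (α/(n:ℝ)-1) *
            ∫⁻ y in pBall x γ, (‖f y‖₊ : ℝ≥0∞) ∂μ) γ
  have claim2 : ENNReal.ofReal (b x) * fracMax μ α f x ≤
      fracMax μ α (fun y => b y * f y) x + D := by
    have hstep : ∀ γ : ℤ, ENNReal.ofReal (b x) * (μ (pBall x γ) ^ (α/(n:ℝ)-1) *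
        ∫⁻ y in pBall x γ, (‖f y‖₊ : ℝ≥0∞) ∂μ) ≤
        fracMax μ α (fun y => b y * f y) x + D := by
      intro γ
      have hptwise : ∀ᵐ y ∂(μ.restrict (pBall x γ)), ENNReal.ofReal (b x) * (‖f y‖₊ : ℝ≥0∞) ≤
          (‖b y * f y‖₊ : ℝ≥0∞) + ENNReal.ofReal (L * ((p:ℝ)^γ)^β) * (‖f y‖₊ : ℝ≥0∞) := by
        refine (ae_restrict_iff' (hKm γ)).mpr (Filter.Eventually.of_forall fun y hy => ?_)
        have hbx : b x ≤ b y + L * ((p:ℝ)^γ)^β := by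
          have h1 := hbxy γ y hy
          have h2 := abs_le.mp h1
          linarith [h2.2]
        calc ENNReal.ofReal (b x) * (‖f y‖₊ : ℝ≥0∞)
            ≤ (ENNReal.ofReal (b y) + ENNReal.ofReal (L * ((p:ℝ)^γ)^β)) * (‖f y‖₊ : ℝ≥0∞) := by
              refine mul_le_mul_left ?_ _
              rw [← ENNReal.ofReal_add (hbpos y) (hrpow_nn γ)]
              exact ENNReal.ofReal_le_ofReal hbx
          _ = (‖b y * f y‖₊ : ℝ≥0∞) + ENNReal.ofReal (L * ((p:ℝ)^γ)^β) * (‖f y‖₊ : ℝ≥0∞) := by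
              rw [nnnorm_mul, ENNReal.coe_mul, ← enorm_eq_nnnorm (b y), Real.enorm_eq_ofReal (hbpos y), add_mul]
      calc ENNReal.ofReal (b x) * (μ (pBall x γ) ^ (α/(n:ℝ)-1) *
              ∫⁻ y in pBall x γ, (‖f y‖₊ : ℝ≥0∞) ∂μ)
          = μ (pBall x γ) ^ (α/(n:ℝ)-1) *
              ∫⁻ y in pBall x γ, ENNReal.ofReal (b x) * (‖f y‖₊ : ℝ≥0∞) ∂μ := by
            rw [lintegral_const_mul' _ _ ENNReal.ofReal_ne_top]
            ring
        _ ≤ μ (pBall x γ) ^ (α/(n:ℝ)-1) * ∫⁻ y in pBall x γ,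
              ((‖b y * f y‖₊ : ℝ≥0∞) + ENNReal.ofReal (L * ((p:ℝ)^γ)^β) * (‖f y‖₊ : ℝ≥0∞)) ∂μ :=
            mul_le_mul_right (lintegral_mono_ae hptwise) _
        _ = μ (pBall x γ) ^ (α/(n:ℝ)-1) * ∫⁻ y in pBall x γ, (‖b y * f y‖₊ : ℝ≥0∞) ∂μ
            + ENNReal.ofReal (L * ((p:ℝ)^γ)^β) * (μ (pBall x γ) ^ (α/(n:ℝ)-1) *
              ∫⁻ y in pBall x γ, (‖f y‖₊ : ℝ≥0∞) ∂μ) := by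
            rw [lintegral_add_left' (hbfm γ), lintegral_const_mul' _ _ ENNReal.ofReal_ne_top]
            ring
        _ ≤ fracMax μ α (fun y => b y * f y) x + D := by
            refine add_le_add ?_ (hEA γ)
            exact le_iSup (fun γ => μ (pBall x γ) ^ (α/(n:ℝ)-1) *
              ∫⁻ y in pBall x γ, (‖b y * f y‖₊ : ℝ≥0∞) ∂μ) γ
    calc ENNReal.ofReal (b x) * fracMax μ α f x
        = ⨆ γ : ℤ, ENNReal.ofReal (b x) * (μ (pBall x γ) ^ (α/(n:ℝ)-1) *
            ∫⁻ y in pBall x γ, (‖f y‖₊ : ℝ≥0∞) ∂μ) := by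
          rw [fracMax, ENNReal.mul_iSup]
      _ ≤ fracMax μ α (fun y => b y * f y) x + D := iSup_le hstep
  have hXT : ENNReal.ofReal (b x) * fracMax μ α f x ≠ ⊤ :=
    ENNReal.mul_ne_top ENNReal.ofReal_ne_top hF
  have hGT : fracMax μ α (fun y => b y * f y) x ≠ ⊤ :=
    ne_top_of_le_ne_top (ENNReal.add_ne_top.mpr ⟨hXT, hDT⟩) claim1
  have hbxF : b x * (fracMax μ α f x).toReal = (ENNReal.ofReal (b x) * fracMax μ α f x).toReal := by
    rw [ENNReal.toReal_mul, ENNReal.toReal_ofReal (hbpos x)]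
  have habs : |nlComm μ α b f x| ≤ D.toReal := by
    rw [nlComm, hbxF, abs_sub_le_iff]
    constructor
    · have h := ENNReal.toReal_mono (ENNReal.add_ne_top.mpr ⟨hGT, hDT⟩) claim2
      rw [ENNReal.toReal_add hGT hDT] at h
      linarith
    · have h := ENNReal.toReal_mono (ENNReal.add_ne_top.mpr ⟨hXT, hDT⟩) claim1
      rw [ENNReal.toReal_add hXT hDT] at h
      linarith
  calc ENNReal.ofReal |nlComm μ α b f x| ≤ ENNReal.ofReal D.toReal :=
        ENNReal.ofReal_le_ofReal habs
    _ = D := ENNReal.ofReal_toReal hDT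


end
end

section
/- Let 0 ≤ α < n, let b be a locally integrable function on Q_p^n, and let B = B_γ(x) be a ball in Q_p^n. Then ∫_B |b(y) − b_B| dy ≤ 2 ∫_B |b(y) − |B|_h^{−α/n} M_{α,B}^p(b)(y)| dy. -/
open MeasureTheory ENNReal

noncomputable section

variable {p : ℕ} [Fact p.Prime] {n : ℕ}

variable [MeasurableSpace (Fin n → ℚ_[p])]

section PadicAux
open NNReal

section AuxLemmas

instance : IsUltrametricDist (Fin n → ℚ_[p]) := by
  constructor
  intro x y z
  rw [dist_pi_le_iff (le_max_iff.2 (Or.inl dist_nonneg))]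
  intro i
  exact (IsUltrametricDist.dist_triangle_max (x i) (y i) (z i)).trans
    (max_le_max (dist_le_pi_dist x y i) (dist_le_pi_dist y z i))

lemma one_lt_p : (1 : ℝ) < (p : ℝ) := by exact_mod_cast (Fact.out : p.Prime).one_lt

lemma p_pos : (0 : ℝ) < (p : ℝ) := lt_trans one_pos one_lt_p

lemma pBall_radius_pos (γ : ℤ) : (0 : ℝ) < (p : ℝ) ^ γ := zpow_pos p_pos γ

lemma padic_norm_le_floor {w : ℚ_[p]} {r : ℝ} (hr : 0 < r) (h : ‖w‖ ≤ r) :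
    ‖w‖ ≤ (p : ℝ) ^ (⌊Real.logb p r⌋) := by
  by_cases hw : w = 0
  · simp [hw, le_of_lt (pBall_radius_pos _)]
  · rw [Padic.norm_eq_zpow_neg_valuation hw] at h ⊢
    have hk : ((-w.valuation : ℤ) : ℝ) ≤ Real.logb p r := by
      have := Real.logb_le_logb_of_le (one_lt_p (p := p)) (zpow_pos (p_pos (p := p)) (-w.valuation)) h
      rwa [show ((p : ℝ) ^ (-w.valuation : ℤ)) = (p : ℝ) ^ ((-w.valuation : ℤ) : ℝ) from
        (Real.rpow_intCast _ _).symm, Real.logb_rpow (p_pos (p := p)) (one_lt_p (p := p)).ne'] at this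
    exact zpow_le_zpow_right₀ (one_lt_p (p := p)).le (Int.le_floor.2 hk)

lemma mem_pBall_floor {x y : Fin n → ℚ_[p]} {r : ℝ} (hr : 0 < r) :
    y ∈ Metric.closedBall x r ↔ y ∈ pBall x ⌊Real.logb p r⌋ := by
  simp only [pBall, Metric.mem_closedBall, dist_eq_norm]
  constructor
  · intro h
    rw [pi_norm_le_iff_of_nonneg (le_of_lt (pBall_radius_pos _))]
    intro i
    exact padic_norm_le_floor hr ((norm_le_pi_norm _ i).trans h)
  · intro h
    refine h.trans ?_
    calc (p : ℝ) ^ (⌊Real.logb p r⌋ : ℤ)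
        = (p : ℝ) ^ ((⌊Real.logb p r⌋ : ℤ) : ℝ) := (Real.rpow_intCast _ _).symm
      _ ≤ (p : ℝ) ^ (Real.logb p r) :=
          Real.rpow_le_rpow_of_exponent_le (one_lt_p (p := p)).le (Int.floor_le _)
      _ = r := Real.rpow_logb (p_pos (p := p)) (one_lt_p (p := p)).ne' hr

lemma closedBall_eq_pBall (x : Fin n → ℚ_[p]) {r : ℝ} (hr : 0 < r) :
    Metric.closedBall x r = pBall x ⌊Real.logb p r⌋ :=
  Set.ext fun _ => mem_pBall_floor hr

lemma pBall_mono (x : Fin n → ℚ_[p]) {γ γ' : ℤ} (h : γ ≤ γ') :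
    pBall x γ ⊆ pBall x γ' :=
  Metric.closedBall_subset_closedBall (zpow_le_zpow_right₀ (one_lt_p (p := p)).le h)

lemma mem_pBall_self (x : Fin n → ℚ_[p]) (γ : ℤ) : x ∈ pBall x γ :=
  Metric.mem_closedBall_self (le_of_lt (pBall_radius_pos γ))

lemma pBall_recenter {x y : Fin n → ℚ_[p]} {γ : ℤ} (h : y ∈ pBall x γ) :
    pBall y γ = pBall x γ :=
  (IsUltrametricDist.closedBall_eq_of_mem h).symm

end AuxLemmas

section MeasureLemmas

variable [BorelSpace (Fin n → ℚ_[p])] (μ : Measure (Fin n → ℚ_[p])) [μ.IsAddHaarMeasure]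

lemma pBall_measurableSet (x : Fin n → ℚ_[p]) (γ : ℤ) : MeasurableSet (pBall x γ) :=
  measurableSet_closedBall

lemma meas_pBall_pos (x : Fin n → ℚ_[p]) (γ : ℤ) : 0 < μ (pBall x γ) :=
  lt_of_lt_of_le (Metric.measure_ball_pos μ x (pBall_radius_pos γ))
    (measure_mono Metric.ball_subset_closedBall)

lemma meas_pBall_ne_top (x : Fin n → ℚ_[p]) (γ : ℤ) : μ (pBall x γ) ≠ ∞ :=
  (isCompact_closedBall x _).measure_lt_top.ne

lemma meas_pBall_translate (x : Fin n → ℚ_[p]) (γ : ℤ) :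
    μ (pBall x γ) = μ (pBall 0 γ) := by
  have h : pBall x γ = (fun y => -x + y) ⁻¹' (pBall 0 γ) := by
    ext y
    simp [pBall, Metric.mem_closedBall, dist_eq_norm, neg_add_eq_sub]
  rw [h, measure_preimage_add]

lemma exists_scale :
    ∃ c : ℝ≥0, ∀ (x : Fin n → ℚ_[p]) (γ : ℤ),
      μ (pBall x (γ + 1)) = (c : ℝ≥0∞) * μ (pBall x γ) := by
  have hp0 : (p : ℚ_[p]) ≠ 0 := by
    exact_mod_cast (Fact.out : p.Prime).ne_zero
  let T : (Fin n → ℚ_[p]) ≃L[ℚ_[p]] (Fin n → ℚ_[p]) :=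
    { LinearEquiv.smulOfNeZero ℚ_[p] _ _ hp0 with
      continuous_toFun := continuous_const_smul _
      continuous_invFun := continuous_const_smul _ }
  haveI : (μ.map T).IsAddHaarMeasure := T.isAddHaarMeasure_map μ
  have key : μ.map T = Measure.addHaarScalarFactor (μ.map T) μ • μ :=
    Measure.isAddLeftInvariant_eq_smul _ _
  refine ⟨Measure.addHaarScalarFactor (μ.map T) μ, fun x γ => ?_⟩
  have hpre : (T : (Fin n → ℚ_[p]) → (Fin n → ℚ_[p])) ⁻¹' (pBall 0 γ) = pBall 0 (γ + 1) := by
    ext y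
    have hTy : (T : (Fin n → ℚ_[p]) → (Fin n → ℚ_[p])) y = (p : ℚ_[p]) • y := rfl
    simp only [pBall, Set.mem_preimage, Metric.mem_closedBall, dist_zero_right, hTy,
      norm_smul, Padic.norm_p]
    rw [zpow_add_one₀ (ne_of_gt p_pos), inv_mul_le_iff₀ p_pos, mul_comm]
  calc μ (pBall x (γ + 1)) = μ (pBall 0 (γ + 1)) := meas_pBall_translate μ x _
    _ = μ ((T : (Fin n → ℚ_[p]) → (Fin n → ℚ_[p])) ⁻¹' (pBall 0 γ)) := by rw [hpre]
    _ = (μ.map T) (pBall 0 γ) :=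
        (Measure.map_apply T.continuous.measurable (pBall_measurableSet 0 γ)).symm
    _ = (Measure.addHaarScalarFactor (μ.map T) μ : ℝ≥0∞) * μ (pBall 0 γ) := by
        have happ := congrArg (fun m : Measure (Fin n → ℚ_[p]) => m (pBall 0 γ)) key
        rw [happ, Measure.smul_apply, ENNReal.smul_def, smul_eq_mul]
    _ = _ := by rw [meas_pBall_translate μ x γ]

lemma isUnifLocDoubling : IsUnifLocDoublingMeasure μ := by
  obtain ⟨c, hc⟩ := exists_scale μ
  refine ⟨⟨c, ?_⟩⟩
  filter_upwards [self_mem_nhdsWithin] with ε (hε : ε ∈ Set.Ioi (0:ℝ))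
  intro x
  have hε0 : (0:ℝ) < ε := hε
  have h2ε : (0:ℝ) < 2 * ε := by linarith
  rw [closedBall_eq_pBall x hε0, closedBall_eq_pBall x h2ε]
  have hlog : Real.logb p (2 * ε) ≤ Real.logb p ε + 1 := by
    rw [Real.logb_mul (two_ne_zero) (ne_of_gt hε0)]
    have h2p : Real.logb p 2 ≤ 1 := by
      have := Real.logb_le_logb_of_le (one_lt_p (p := p)) (by norm_num : (0:ℝ) < 2)
        (show (2:ℝ) ≤ (p:ℝ) by exact_mod_cast (Fact.out : p.Prime).two_le)
      rwa [Real.logb_self_eq_one (one_lt_p (p := p))] at this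
    linarith
  have hfl : ⌊Real.logb p (2 * ε)⌋ ≤ ⌊Real.logb p ε⌋ + 1 := by
    calc ⌊Real.logb p (2 * ε)⌋ ≤ ⌊Real.logb p ε + 1⌋ := Int.floor_le_floor hlog
      _ = ⌊Real.logb p ε⌋ + 1 := by rw [Int.floor_add_one]
  calc μ (pBall x ⌊Real.logb p (2 * ε)⌋) ≤ μ (pBall x (⌊Real.logb p ε⌋ + 1)) :=
        measure_mono (pBall_mono x hfl)
    _ = (c : ℝ≥0∞) * μ (pBall x ⌊Real.logb p ε⌋) := hc x _

end MeasureLemmas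

section Finiteness

open Filter Topology

variable [BorelSpace (Fin n → ℚ_[p])] (μ : Measure (Fin n → ℚ_[p])) [μ.IsAddHaarMeasure]

lemma tendsto_pow_gamma : Tendsto (fun γ' : ℤ => (p:ℝ)^γ') atBot (𝓝 0) := by
  rw [Metric.tendsto_nhds]
  intro ε hε
  rw [Filter.eventually_atBot]
  refine ⟨⌊Real.logb p ε⌋ - 1, fun γ' hγ' => ?_⟩
  rw [Real.dist_eq, sub_zero, abs_of_pos (zpow_pos (p_pos (p := p)) _)]
  calc (p:ℝ)^γ' ≤ (p:ℝ)^(⌊Real.logb p ε⌋ - 1) := zpow_le_zpow_right₀ (one_lt_p (p := p)).le hγ'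
    _ = (p:ℝ)^((⌊Real.logb p ε⌋ - 1 : ℤ) : ℝ) := (Real.rpow_intCast _ _).symm
    _ < (p:ℝ)^(Real.logb p ε) := by
        apply Real.rpow_lt_rpow_of_exponent_lt (one_lt_p (p := p))
        have := Int.floor_le (Real.logb p ε)
        push_cast
        linarith
    _ = ε := Real.rpow_logb (p_pos (p := p)) (one_lt_p (p := p)).ne' hε

lemma fracMaxOn_ae_ne_top {α : ℝ} (hα0 : 0 ≤ α) {b : (Fin n → ℚ_[p]) → ℝ}
    (hb : LocallyIntegrable b μ) (x : Fin n → ℚ_[p]) (γ : ℤ) :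
    ∀ᵐ y ∂μ, fracMaxOn μ α (pBall x γ) b y ≠ ∞ := by
  haveI := isUnifLocDoubling μ
  have hI : ∫⁻ z in pBall x γ, (‖b z‖₊ : ℝ≥0∞) ∂μ ≠ ∞ :=
    (hb.integrableOn_isCompact (isCompact_closedBall x _)).2.ne
  set I := ∫⁻ z in pBall x γ, (‖b z‖₊ : ℝ≥0∞) ∂μ with hIdef
  have hδ : Tendsto (fun γ' : ℤ => (p:ℝ)^γ') atBot (𝓝[>] (0:ℝ)) :=
    tendsto_nhdsWithin_iff.2 ⟨tendsto_pow_gamma,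
      Eventually.of_forall fun γ' => zpow_pos (p_pos (p := p)) _⟩
  filter_upwards [IsUnifLocDoublingMeasure.ae_tendsto_average_norm_sub μ hb 1] with y hy
  have hmem : ∀ᶠ γ' : ℤ in atBot, y ∈ Metric.closedBall y (1 * (p:ℝ)^γ') :=
    Eventually.of_forall fun γ' => Metric.mem_closedBall_self (by positivity)
  have htend := hy (fun _ => y) (fun γ' : ℤ => (p:ℝ)^γ') hδ hmem
  obtain ⟨γ0, hγ0⟩ := Filter.eventually_atBot.1 (htend.eventually (eventually_le_nhds one_pos))
  set L : ℝ≥0∞ := μ (pBall x γ) ^ (α/(n:ℝ)) *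
      ((μ (pBall y γ0))⁻¹ * I + ENNReal.ofReal (1 + ‖b y‖)) with hLdef
  have hLne : L ≠ ∞ := by
    apply ENNReal.mul_ne_top
    · exact ENNReal.rpow_ne_top_of_nonneg (by positivity) (meas_pBall_ne_top μ x γ)
    · exact ENNReal.add_ne_top.2 ⟨ENNReal.mul_ne_top
        (ENNReal.inv_ne_top.2 (meas_pBall_pos μ y γ0).ne') hI, ENNReal.ofReal_ne_top⟩
  refine ne_top_of_le_ne_top hLne ?_
  rw [fracMaxOn]
  refine iSup_le fun γ' => iSup_le fun hsub => ?_
  have hne' : μ (pBall y γ') ≠ 0 := (meas_pBall_pos μ y γ').ne'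
  have hfin' : μ (pBall y γ') ≠ ∞ := meas_pBall_ne_top μ y γ'
  have hsplit : μ (pBall y γ') ^ (α/(n:ℝ) - 1)
      = μ (pBall y γ') ^ (α/(n:ℝ)) * (μ (pBall y γ'))⁻¹ := by
    rw [sub_eq_add_neg, ENNReal.rpow_add _ _ hne' hfin', ENNReal.rpow_neg_one]
  have hbase : μ (pBall y γ') ^ (α/(n:ℝ)) ≤ μ (pBall x γ) ^ (α/(n:ℝ)) :=
    ENNReal.rpow_le_rpow (measure_mono hsub) (by positivity)
  have hkey : (μ (pBall y γ'))⁻¹ * ∫⁻ z in pBall y γ', (‖b z‖₊ : ℝ≥0∞) ∂μ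
      ≤ (μ (pBall y γ0))⁻¹ * I + ENNReal.ofReal (1 + ‖b y‖) := by
    rcases le_or_gt γ' γ0 with hc | hc
    · have hint : IntegrableOn b (pBall y γ') μ :=
        hb.integrableOn_isCompact (isCompact_closedBall y _)
      have hpos' : 0 < (μ (pBall y γ')).toReal := ENNReal.toReal_pos hne' hfin'
      have havg := hγ0 γ' hc
      rw [show Metric.closedBall y ((p:ℝ)^γ') = pBall y γ' from rfl, setAverage_eq,
        smul_eq_mul, measureReal_def, inv_mul_le_iff₀ hpos', mul_one] at havg
      have hintsub : Integrable (fun z => ‖b z - b y‖) (μ.restrict (pBall y γ')) :=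
        (hint.sub (integrableOn_const hfin')).norm
      have h2 : ∫ z in pBall y γ', ‖b z‖ ∂μ ≤ (μ (pBall y γ')).toReal * (1 + ‖b y‖) := by
        have hmono : ∫ z in pBall y γ', ‖b z‖ ∂μ
            ≤ ∫ z in pBall y γ', (‖b z - b y‖ + ‖b y‖) ∂μ := by
          refine integral_mono hint.norm (hintsub.add (integrableOn_const hfin'))
            fun z => ?_
          calc ‖b z‖ = ‖(b z - b y) + b y‖ := by rw [sub_add_cancel]
            _ ≤ ‖b z - b y‖ + ‖b y‖ := norm_add_le _ _
        rw [integral_add hintsub (integrableOn_const hfin'),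
          integral_const, measureReal_restrict_apply_univ, measureReal_def, smul_eq_mul] at hmono
        nlinarith [norm_nonneg (b y)]
      have h3 : ∫⁻ z in pBall y γ', (‖b z‖₊ : ℝ≥0∞) ∂μ
          ≤ μ (pBall y γ') * ENNReal.ofReal (1 + ‖b y‖) := by
        simp_rw [← enorm_eq_nnnorm]
        rw [← ofReal_integral_norm_eq_lintegral_enorm hint]
        calc ENNReal.ofReal (∫ z in pBall y γ', ‖b z‖ ∂μ)
            ≤ ENNReal.ofReal ((μ (pBall y γ')).toReal * (1 + ‖b y‖)) :=
              ENNReal.ofReal_le_ofReal h2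
          _ = ENNReal.ofReal (μ (pBall y γ')).toReal * ENNReal.ofReal (1 + ‖b y‖) :=
              ENNReal.ofReal_mul ENNReal.toReal_nonneg
          _ = μ (pBall y γ') * ENNReal.ofReal (1 + ‖b y‖) := by
              rw [ENNReal.ofReal_toReal hfin']
      calc (μ (pBall y γ'))⁻¹ * ∫⁻ z in pBall y γ', (‖b z‖₊ : ℝ≥0∞) ∂μ
          ≤ (μ (pBall y γ'))⁻¹ * (μ (pBall y γ') * ENNReal.ofReal (1 + ‖b y‖)) :=
            mul_le_mul_right h3 _
        _ = ENNReal.ofReal (1 + ‖b y‖) := by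
            rw [← mul_assoc, ENNReal.inv_mul_cancel hne' hfin', one_mul]
        _ ≤ _ := le_add_self
    · have h1 : (μ (pBall y γ'))⁻¹ ≤ (μ (pBall y γ0))⁻¹ :=
        ENNReal.inv_le_inv' (measure_mono (pBall_mono y hc.le))
      have h2 : ∫⁻ z in pBall y γ', (‖b z‖₊ : ℝ≥0∞) ∂μ ≤ I :=
        lintegral_mono' (Measure.restrict_mono hsub le_rfl) le_rfl
      exact le_trans (mul_le_mul' h1 h2) (self_le_add_right _ _)
  calc μ (pBall y γ') ^ (α/(n:ℝ) - 1) * ∫⁻ z in pBall y γ', (‖b z‖₊ : ℝ≥0∞) ∂μ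
      = μ (pBall y γ') ^ (α/(n:ℝ)) *
        ((μ (pBall y γ'))⁻¹ * ∫⁻ z in pBall y γ', (‖b z‖₊ : ℝ≥0∞) ∂μ) := by
        rw [hsplit, mul_assoc]
    _ ≤ L := mul_le_mul' hbase hkey

end Finiteness

end PadicAux

theorem integral_abs_sub_avg_le_two_mul
    (hn : 0 < n) [BorelSpace (Fin n → ℚ_[p])]
    (μ : Measure (Fin n → ℚ_[p])) [μ.IsAddHaarMeasure]
    (hμ : μ (Metric.closedBall 0 1) = 1)
    (α : ℝ) (hα0 : 0 ≤ α) (hαn : α < n)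
    (b : (Fin n → ℚ_[p]) → ℝ) (hb : LocallyIntegrable b μ)
    (x : (Fin n → ℚ_[p])) (γ : ℤ) :
    ∫⁻ y in pBall x γ, ENNReal.ofReal |b y - avg μ (pBall x γ) b| ∂μ ≤
      2 * ∫⁻ y in pBall x γ, ENNReal.ofReal
        |b y - (μ (pBall x γ)).toReal ^ (-(α / (n : ℝ))) *
          (fracMaxOn μ α (pBall x γ) b y).toReal| ∂μ := by
  classical
  set B := pBall x γ with hBdef
  have hBmeas : MeasurableSet B := pBall_measurableSet x γ
  have hBne : μ B ≠ 0 := (meas_pBall_pos μ x γ).ne'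
  have hBfin : μ B ≠ ∞ := meas_pBall_ne_top μ x γ
  have hBpos : 0 < (μ B).toReal := ENNReal.toReal_pos hBne hBfin
  have hbB : IntegrableOn b B μ := hb.integrableOn_isCompact (isCompact_closedBall x _)
  set c := avg μ B b with hcdef
  set g : (Fin n → ℚ_[p]) → ℝ :=
    fun y => (μ B).toReal ^ (-(α / (n:ℝ))) * (fracMaxOn μ α B b y).toReal with hgdef
  show ∫⁻ y in B, ENNReal.ofReal |b y - c| ∂μ ≤ 2 * ∫⁻ y in B, ENNReal.ofReal |b y - g y| ∂μ
  set I := ∫⁻ z in B, (‖b z‖₊ : ℝ≥0∞) ∂μ with hIdef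
  have hIr : ENNReal.ofReal (∫ z in B, ‖b z‖ ∂μ) = I :=
    ofReal_integral_norm_eq_lintegral_enorm hbB
  have hIfin : I ≠ ∞ := hbB.2.ne
  have hIto : I.toReal = ∫ z in B, ‖b z‖ ∂μ := by
    rw [← hIr, ENNReal.toReal_ofReal (integral_nonneg fun z => norm_nonneg _)]
  -- step 1 : c ≤ g a.e. on B
  have hcg : ∀ᵐ y ∂(μ.restrict B), c ≤ g y := by
    filter_upwards [ae_restrict_of_ae (fracMaxOn_ae_ne_top μ hα0 hb x γ), ae_restrict_mem hBmeas]
      with y hMfin hyB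
    have hrec : pBall y γ = B := pBall_recenter hyB
    have hlow : μ B ^ (α/(n:ℝ) - 1) * I ≤ fracMaxOn μ α B b y := by
      rw [fracMaxOn]
      refine le_trans ?_ (le_iSup _ γ)
      rw [hrec]
      exact le_iSup (fun _ : B ⊆ B => μ B ^ (α/(n:ℝ) - 1) * I) Set.Subset.rfl
    have h1 : (μ B ^ (α/(n:ℝ) - 1) * I).toReal ≤ (fracMaxOn μ α B b y).toReal :=
      ENNReal.toReal_mono hMfin hlow
    have h2 : (μ B ^ (α/(n:ℝ) - 1) * I).toReal = (μ B).toReal ^ (α/(n:ℝ) - 1) * I.toReal := by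
      rw [ENNReal.toReal_mul, ENNReal.toReal_rpow]
    have h3 : c ≤ (μ B).toReal⁻¹ * I.toReal := by
      rw [hcdef, avg, hIto]
      exact mul_le_mul_of_nonneg_left
        (integral_mono hbB hbB.norm fun z => Real.le_norm_self _)
        (inv_nonneg.2 ENNReal.toReal_nonneg)
    have h4 : (μ B).toReal ^ (-(α/(n:ℝ))) * (μ B).toReal ^ (α/(n:ℝ) - 1) = (μ B).toReal⁻¹ := by
      rw [← Real.rpow_add hBpos, show -(α/(n:ℝ)) + (α/(n:ℝ) - 1) = -1 by ring,
        Real.rpow_neg_one]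
    calc c ≤ (μ B).toReal⁻¹ * I.toReal := h3
      _ = (μ B).toReal ^ (-(α/(n:ℝ))) * ((μ B).toReal ^ (α/(n:ℝ) - 1) * I.toReal) := by
          rw [← mul_assoc, h4]
      _ = (μ B).toReal ^ (-(α/(n:ℝ))) * (μ B ^ (α/(n:ℝ) - 1) * I).toReal := by rw [h2]
      _ ≤ (μ B).toReal ^ (-(α/(n:ℝ))) * (fracMaxOn μ α B b y).toReal :=
          mul_le_mul_of_nonneg_left h1 (Real.rpow_nonneg ENNReal.toReal_nonneg _)
  -- measurable representative
  obtain ⟨f, hfmeas, hbf⟩ : ∃ f, StronglyMeasurable f ∧ b =ᵐ[μ] f :=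
    ⟨hb.aestronglyMeasurable.mk b, hb.aestronglyMeasurable.stronglyMeasurable_mk,
      hb.aestronglyMeasurable.ae_eq_mk⟩
  have hbfB : b =ᵐ[μ.restrict B] f := ae_restrict_of_ae hbf
  have hfB : Integrable f (μ.restrict B) := hbB.congr hbfB
  set E : Set (Fin n → ℚ_[p]) := {y | f y ≤ c} with hEdef
  have hEmeas : MeasurableSet E := measurableSet_le hfmeas.measurable measurable_const
  have hgoalL : ∫⁻ y in B, ENNReal.ofReal |b y - c| ∂μ
      = ∫⁻ y in B, ENNReal.ofReal |f y - c| ∂μ :=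
    lintegral_congr_ae (hbfB.mono fun y hy => by dsimp only; rw [hy])
  have hgoalR : ∫⁻ y in B, ENNReal.ofReal |b y - g y| ∂μ
      = ∫⁻ y in B, ENNReal.ofReal |f y - g y| ∂μ :=
    lintegral_congr_ae (hbfB.mono fun y hy => by dsimp only; rw [hy])
  rw [hgoalL, hgoalR]
  have hconst : Integrable (fun _ => c) (μ.restrict B) :=
    integrableOn_const hBfin
  have hsubint : Integrable (fun y => f y - c) (μ.restrict B) := hfB.sub hconst
  have hzero : ∫ y in B, (f y - c) ∂μ = 0 := by
    rw [integral_sub hfB hconst, integral_const, measureReal_restrict_apply_univ, measureReal_def, smul_eq_mul]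
    have hfb : ∫ y in B, f y ∂μ = ∫ y in B, b y ∂μ := (integral_congr_ae hbfB).symm
    rw [hfb, hcdef, avg, ← mul_assoc, mul_inv_cancel₀ hBpos.ne', one_mul, sub_self]
  have hsplitL : ∫⁻ y in B, ENNReal.ofReal |f y - c| ∂μ
      = ∫⁻ y in E, ENNReal.ofReal |f y - c| ∂(μ.restrict B)
        + ∫⁻ y in Eᶜ, ENNReal.ofReal |f y - c| ∂(μ.restrict B) :=
    (lintegral_add_compl _ hEmeas).symm
  have habs1 : ∫⁻ y in E, ENNReal.ofReal |f y - c| ∂(μ.restrict B)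
      = ∫⁻ y in E, ENNReal.ofReal (c - f y) ∂(μ.restrict B) := by
    refine setLIntegral_congr_fun hEmeas (fun y hy => ?_)
    rw [abs_sub_comm, abs_of_nonneg (sub_nonneg.2 hy)]
  have habs2 : ∫⁻ y in Eᶜ, ENNReal.ofReal |f y - c| ∂(μ.restrict B)
      = ∫⁻ y in Eᶜ, ENNReal.ofReal (f y - c) ∂(μ.restrict B) := by
    refine setLIntegral_congr_fun hEmeas.compl (fun y hy => ?_)
    have hcy : c ≤ f y := (not_le.1 (by simpa [E] using hy : ¬ f y ≤ c)).le
    rw [abs_of_nonneg (sub_nonneg.2 hcy)]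
  have hE1 : ∫⁻ y in E, ENNReal.ofReal (c - f y) ∂(μ.restrict B)
      = ENNReal.ofReal (∫ y in E, (c - f y) ∂(μ.restrict B)) :=
    (ofReal_integral_eq_lintegral_ofReal ((hconst.sub hfB).restrict)
      ((ae_restrict_mem hEmeas).mono fun y hy => sub_nonneg.2 hy)).symm
  have hE2 : ∫⁻ y in Eᶜ, ENNReal.ofReal (f y - c) ∂(μ.restrict B)
      = ENNReal.ofReal (∫ y in Eᶜ, (f y - c) ∂(μ.restrict B)) :=
    (ofReal_integral_eq_lintegral_ofReal (hsubint.restrict)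
      ((ae_restrict_mem hEmeas.compl).mono fun y hy => sub_nonneg.2 (not_le.1 (by simpa [E] using hy : ¬ f y ≤ c)).le)).symm
  have heq : ∫ y in Eᶜ, (f y - c) ∂(μ.restrict B) = ∫ y in E, (c - f y) ∂(μ.restrict B) := by
    have hadd := integral_add_compl hEmeas hsubint
    rw [hzero] at hadd
    have h5 : ∫ y in E, (c - f y) ∂(μ.restrict B) = - ∫ y in E, (f y - c) ∂(μ.restrict B) := by
      rw [← integral_neg]
      exact integral_congr_ae (ae_of_all _ fun y => by ring)
    rw [h5]
    linarith
  have hbound : ∫⁻ y in E, ENNReal.ofReal (c - f y) ∂(μ.restrict B)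
      ≤ ∫⁻ y in E, ENNReal.ofReal |f y - g y| ∂(μ.restrict B) := by
    refine lintegral_mono_ae ?_
    filter_upwards [ae_restrict_mem hEmeas,
      hcg.filter_mono (ae_mono Measure.restrict_le_self)] with y hyE hycg
    apply ENNReal.ofReal_le_ofReal
    have hfyc : f y ≤ c := hyE
    calc c - f y ≤ g y - f y := by linarith
      _ ≤ |g y - f y| := le_abs_self _
      _ = |f y - g y| := abs_sub_comm _ _
  calc ∫⁻ y in B, ENNReal.ofReal |f y - c| ∂μ
      = ∫⁻ y in E, ENNReal.ofReal (c - f y) ∂(μ.restrict B)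
        + ∫⁻ y in Eᶜ, ENNReal.ofReal (f y - c) ∂(μ.restrict B) := by
        rw [hsplitL, habs1, habs2]
    _ = ∫⁻ y in E, ENNReal.ofReal (c - f y) ∂(μ.restrict B)
        + ∫⁻ y in E, ENNReal.ofReal (c - f y) ∂(μ.restrict B) := by
        rw [hE1, hE2, heq]
    _ = 2 * ∫⁻ y in E, ENNReal.ofReal (c - f y) ∂(μ.restrict B) := (two_mul _).symm
    _ ≤ 2 * ∫⁻ y in E, ENNReal.ofReal |f y - g y| ∂(μ.restrict B) :=
        mul_le_mul_right hbound 2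
    _ ≤ 2 * ∫⁻ y in B, ENNReal.ofReal |f y - g y| ∂μ :=
        mul_le_mul_right (lintegral_mono' Measure.restrict_le_self le_rfl) 2
end
end

section
/- Let 0 ≤ α < n, let b be a locally integrable function on Q_p^n, and let B = B_γ(x) be a ball in Q_p^n. Then for every y ∈ B, b(y) − |B|_h^{−α/n} M_{α,B}^p(b)(y) = |B|_h^{−α/n} [b, M_α^p](χ_B)(y); consequently, (b − |B|_h^{−α/n} M_{α,B}^p(b)) χ_B = |B|_h^{−α/n} ([b, M_α^p](χ_B)) χ_B on all of Q_p^n. -/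
open MeasureTheory ENNReal

noncomputable section

variable {p : ℕ} [Fact p.Prime] {n : ℕ}

variable [MeasurableSpace (Fin n → ℚ_[p])]

instance inst_s18 : IsUltrametricDist (Fin n → ℚ_[p]) := by
  constructor
  intro x y z
  rw [dist_pi_le_iff (le_max_iff.2 (Or.inl dist_nonneg))]
  intro i
  exact (IsUltrametricDist.dist_triangle_max (x i) (y i) (z i)).trans
    (max_le_max (dist_le_pi_dist x y i) (dist_le_pi_dist y z i))

lemma ennreal_rpow_anti {x y : ℝ≥0∞} {z : ℝ} (hxy : x ≤ y) (hz : z ≤ 0) : y ^ z ≤ x ^ z := by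
  calc y ^ z = (y ^ (-z))⁻¹ := by rw [← ENNReal.rpow_neg, neg_neg]
    _ ≤ (x ^ (-z))⁻¹ := ENNReal.inv_le_inv.2 (ENNReal.rpow_le_rpow hxy (neg_nonneg.2 hz))
    _ = x ^ z := by rw [← ENNReal.rpow_neg, neg_neg]

theorem sub_fracMaxOn_eq_nlComm_indicator
    (hn : 0 < n) [BorelSpace (Fin n → ℚ_[p])]
    (μ : Measure (Fin n → ℚ_[p])) [μ.IsAddHaarMeasure]
    (hμ : μ (Metric.closedBall 0 1) = 1)
    (α : ℝ) (hα0 : 0 ≤ α) (hαn : α < n)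
    (b : (Fin n → ℚ_[p]) → ℝ) (hb : LocallyIntegrable b μ)
    (x : (Fin n → ℚ_[p])) (γ : ℤ) :
    (∀ y ∈ pBall x γ,
      b y - (μ (pBall x γ)).toReal ^ (-(α / (n : ℝ))) *
        (fracMaxOn μ α (pBall x γ) b y).toReal =
      (μ (pBall x γ)).toReal ^ (-(α / (n : ℝ))) *
        nlComm μ α b (Set.indicator (pBall x γ) (fun _ => (1 : ℝ))) y) ∧
    Set.indicator (pBall x γ) (fun z =>
        b z - (μ (pBall x γ)).toReal ^ (-(α / (n : ℝ))) *
          (fracMaxOn μ α (pBall x γ) b z).toReal) =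
      Set.indicator (pBall x γ) (fun z =>
        (μ (pBall x γ)).toReal ^ (-(α / (n : ℝ))) *
          nlComm μ α b (Set.indicator (pBall x γ) (fun _ => (1 : ℝ))) z) := by
  classical
  have hp1 : (1:ℝ) ≤ (p:ℝ) := by exact_mod_cast (Fact.out : p.Prime).one_lt.le
  have hp0 : (0:ℝ) < (p:ℝ) := lt_of_lt_of_le one_pos hp1
  have hrpos : ∀ δ : ℤ, (0:ℝ) < (p:ℝ) ^ δ := fun δ => zpow_pos hp0 δ
  have hBmeas : MeasurableSet (pBall x γ) := measurableSet_closedBall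
  have hballpos : ∀ (w : Fin n → ℚ_[p]) (δ : ℤ), μ (pBall w δ) ≠ 0 := fun w δ =>
    ne_of_gt (lt_of_lt_of_le (Metric.measure_ball_pos μ w (hrpos δ))
      (measure_mono Metric.ball_subset_closedBall))
  have hballtop : ∀ (w : Fin n → ℚ_[p]) (δ : ℤ), μ (pBall w δ) ≠ ⊤ := fun w δ =>
    (isCompact_closedBall w _).measure_lt_top.ne
  have hnpos : (0:ℝ) < n := by exact_mod_cast hn
  have he0 : α / (n:ℝ) - 1 ≤ 0 := by
    have : α / (n:ℝ) < 1 := (div_lt_one hnpos).2 hαn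
    linarith
  have hαn0 : 0 ≤ α / (n:ℝ) := div_nonneg hα0 hnpos.le
  have hmul : ∀ (w : Fin n → ℚ_[p]) (δ : ℤ),
      μ (pBall w δ) ^ (α/(n:ℝ) - 1) * μ (pBall w δ) = μ (pBall w δ) ^ (α/(n:ℝ)) := by
    intro w δ
    have h := ENNReal.rpow_add (α/(n:ℝ)-1) 1 (hballpos w δ) (hballtop w δ)
    rw [ENNReal.rpow_one] at h
    rw [← h]
    norm_num
  have hindint : ∀ S : Set (Fin n → ℚ_[p]),
      (∫⁻ z in S, (‖Set.indicator (pBall x γ) (fun _ => (1:ℝ)) z‖₊ : ℝ≥0∞) ∂μ)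
        = μ (pBall x γ ∩ S) := by
    intro S
    calc (∫⁻ z in S, (‖Set.indicator (pBall x γ) (fun _ => (1:ℝ)) z‖₊ : ℝ≥0∞) ∂μ)
        = ∫⁻ z in S, (pBall x γ).indicator (fun _ => (1:ℝ≥0∞)) z ∂μ := by
          apply lintegral_congr; intro z
          by_cases hz : z ∈ pBall x γ <;> simp [hz]
      _ = ∫⁻ z in pBall x γ, (1:ℝ≥0∞) ∂(μ.restrict S) := lintegral_indicator hBmeas _
      _ = μ (pBall x γ ∩ S) := by
          rw [Measure.restrict_restrict hBmeas, setLIntegral_one]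
  have hbint : ∀ S : Set (Fin n → ℚ_[p]),
      (∫⁻ z in S, (‖b z * Set.indicator (pBall x γ) (fun _ => (1:ℝ)) z‖₊ : ℝ≥0∞) ∂μ)
        = ∫⁻ z in pBall x γ ∩ S, (‖b z‖₊ : ℝ≥0∞) ∂μ := by
    intro S
    calc (∫⁻ z in S, (‖b z * Set.indicator (pBall x γ) (fun _ => (1:ℝ)) z‖₊ : ℝ≥0∞) ∂μ)
        = ∫⁻ z in S, (pBall x γ).indicator (fun z => (‖b z‖₊ : ℝ≥0∞)) z ∂μ := by
          apply lintegral_congr; intro z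
          by_cases hz : z ∈ pBall x γ <;> simp [hz]
      _ = ∫⁻ z in pBall x γ, (‖b z‖₊ : ℝ≥0∞) ∂(μ.restrict S) := lintegral_indicator hBmeas _
      _ = ∫⁻ z in pBall x γ ∩ S, (‖b z‖₊ : ℝ≥0∞) ∂μ := by
          rw [Measure.restrict_restrict hBmeas]
  have key : ∀ y ∈ pBall x γ,
      b y - (μ (pBall x γ)).toReal ^ (-(α / (n : ℝ))) *
        (fracMaxOn μ α (pBall x γ) b y).toReal =
      (μ (pBall x γ)).toReal ^ (-(α / (n : ℝ))) *
        nlComm μ α b (Set.indicator (pBall x γ) (fun _ => (1 : ℝ))) y := by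
    intro y hy
    have hyB : pBall y γ = pBall x γ := (IsUltrametricDist.closedBall_eq_of_mem (show y ∈ Metric.closedBall x ((p:ℝ)^γ) from hy)).symm
    have hsub : ∀ δ : ℤ, δ ≤ γ → pBall y δ ⊆ pBall x γ := by
      intro δ hδ
      rw [← hyB]
      exact Metric.closedBall_subset_closedBall (zpow_le_zpow_right₀ hp1 hδ)
    have hsup : ∀ δ : ℤ, γ ≤ δ → pBall x γ ⊆ pBall y δ := by
      intro δ hδ
      rw [← hyB]
      exact Metric.closedBall_subset_closedBall (zpow_le_zpow_right₀ hp1 hδ)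
    have hA : fracMax μ α (Set.indicator (pBall x γ) (fun _ => (1:ℝ))) y
        = μ (pBall x γ) ^ (α/(n:ℝ)) := by
      unfold fracMax
      apply le_antisymm
      · apply iSup_le; intro δ
        rw [hindint (pBall y δ)]
        rcases le_total δ γ with h | h
        · rw [Set.inter_eq_self_of_subset_right (hsub δ h), hmul y δ]
          exact ENNReal.rpow_le_rpow (measure_mono (hsub δ h)) hαn0
        · rw [Set.inter_eq_self_of_subset_left (hsup δ h), ← hmul x γ]
          exact mul_le_mul_left
            (ennreal_rpow_anti (measure_mono (hsup δ h)) he0) _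
      · refine le_trans (le_of_eq ?_) (le_iSup _ γ)
        rw [hindint (pBall y γ), hyB, Set.inter_self, hmul x γ]
    have hB : fracMax μ α (fun z => b z * Set.indicator (pBall x γ) (fun _ => (1:ℝ)) z) y
        = fracMaxOn μ α (pBall x γ) b y := by
      unfold fracMax fracMaxOn
      apply le_antisymm
      · apply iSup_le; intro δ
        rw [hbint (pBall y δ)]
        rcases le_total δ γ with h | h
        · rw [Set.inter_eq_self_of_subset_right (hsub δ h)]
          exact le_iSup₂ (f := fun (δ : ℤ) (_ : pBall y δ ⊆ pBall x γ) =>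
            μ (pBall y δ) ^ (α/(n:ℝ)-1) * ∫⁻ z in pBall y δ, (‖b z‖₊ : ℝ≥0∞) ∂μ) δ (hsub δ h)
        · rw [Set.inter_eq_self_of_subset_left (hsup δ h)]
          have h1 : μ (pBall y δ) ^ (α/(n:ℝ)-1) * ∫⁻ z in pBall x γ, (‖b z‖₊ : ℝ≥0∞) ∂μ
              ≤ μ (pBall y γ) ^ (α/(n:ℝ)-1) * ∫⁻ z in pBall y γ, (‖b z‖₊ : ℝ≥0∞) ∂μ := by
            rw [hyB]
            exact mul_le_mul_left
              (ennreal_rpow_anti (measure_mono (hsup δ h)) he0) _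
          exact h1.trans (le_iSup₂ (f := fun (δ : ℤ) (_ : pBall y δ ⊆ pBall x γ) =>
            μ (pBall y δ) ^ (α/(n:ℝ)-1) * ∫⁻ z in pBall y δ, (‖b z‖₊ : ℝ≥0∞) ∂μ) γ
            (hyB ▸ Set.Subset.rfl))
      · apply iSup_le; intro δ; apply iSup_le; intro hδB
        refine le_trans (le_of_eq ?_) (le_iSup _ δ)
        rw [hbint (pBall y δ), Set.inter_eq_self_of_subset_right hδB]
    unfold nlComm
    rw [hA, hB, ← ENNReal.toReal_rpow]
    have ht : 0 < (μ (pBall x γ)).toReal := ENNReal.toReal_pos (hballpos x γ) (hballtop x γ)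
    have h1 : (μ (pBall x γ)).toReal ^ (-(α/(n:ℝ))) * (μ (pBall x γ)).toReal ^ (α/(n:ℝ)) = 1 := by
      rw [← Real.rpow_add ht]
      simp
    linear_combination (-(b y)) * h1
  exact ⟨key, Set.indicator_congr key⟩


end
end
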